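/- arXiv:1303.4680 — 2 statements merged into one kernel-verified Lean document; each statement's English description precedes it below -/
import Mathlib

section
/- Let (R,𝔪,k) be a commutative Noetherian local ring with 𝔪 ≠ 0. Then ν^n_1(k) = 0 for all n ≥ 0; that is, the map Tor_1^R(k, R/𝔪^{n+1}) → Tor_1^R(k, R/𝔪^n) induced by the canonical surjection R/𝔪^{n+1} → R/𝔪^n is the zero map for every n ≥ 0. -/
/-!
Resolve `R/𝔪^{n+1}` and `R/𝔪^n` by projectives `P` and `Q`. Since `𝔪^{n+1} = 𝔪 𝔪^n`, the
surjection lifts to a chain map `φ` with `φ₁(P₁) ⊆ 𝔪 Q₁`: in degree zero factor `P₀ → R/𝔪^{n+1}`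
through `R` and send `1 ↦ q`, where `q ∈ Q₀` lies over `1`; this maps `ker(P₀ → R/𝔪^{n+1})` into
`𝔪^{n+1} q ⊆ 𝔪 ker(Q₀ → R/𝔪^n) = d(𝔪 Q₁)`, and projectivity of `P₁` lifts into `𝔪 Q₁`. As `𝔪`
kills `k`, the map `k ⊗ φ₁` vanishes, hence so does the induced map on `H₁ = Tor₁`.
-/

open CategoryTheory IsLocalRing

/-- The map `ν^n_i(M) : Tor_i^R(M, R/𝔪^{n+1}) → Tor_i^R(M, R/𝔪^n)` induced by the
canonical surjection `R/𝔪^{n+1} → R/𝔪^n`. -/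
noncomputable def nuMap (R : Type) [CommRing R] [IsLocalRing R]
    (M : Type) [AddCommGroup M] [Module R M] (i n : ℕ) :
    ((Tor (ModuleCat R) i).obj (ModuleCat.of R M)).obj
        (ModuleCat.of R (R ⧸ (maximalIdeal R ^ (n + 1)))) ⟶
      ((Tor (ModuleCat R) i).obj (ModuleCat.of R M)).obj
        (ModuleCat.of R (R ⧸ (maximalIdeal R ^ n))) :=
  ((Tor (ModuleCat R) i).obj (ModuleCat.of R M)).map
    (ModuleCat.ofHom (Submodule.mapQ _ _ LinearMap.id
      (by simpa using Ideal.pow_le_pow_right (by omega : n ≤ n + 1))))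

open Submodule

section

variable {R : Type*} [CommRing R]

theorem Module.Projective.exists_lift_mapQ_map_ker_le_smul_ker
    {P Q : Type*} [AddCommGroup P] [Module R P] [Module.Projective R P]
    [AddCommGroup Q] [Module R Q] {𝔞 I J : Ideal R} (hI : I ≤ 𝔞 * J)
    (πP : P →ₗ[R] R ⧸ I) (πQ : Q →ₗ[R] R ⧸ J) (hπQ : Function.Surjective πQ) :
    ∃ φ : P →ₗ[R] Q,
      πQ ∘ₗ φ = mapQ I J LinearMap.id (hI.trans Ideal.mul_le_right : I ≤ J) ∘ₗ πP ∧
      (LinearMap.ker πP).map φ ≤ 𝔞 • LinearMap.ker πQ := by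
  obtain ⟨α, hα⟩ := Module.projective_lifting_property I.mkQ πP I.mkQ_surjective
  obtain ⟨q, hq⟩ := hπQ (Ideal.Quotient.mk J 1)
  have hπQ_smul (r : R) : πQ (r • q) = Ideal.Quotient.mk J r := by
    simp [hq, Algebra.smul_def]
  refine ⟨LinearMap.toSpanSingleton R Q q ∘ₗ α, ?_, ?_⟩
  · ext x
    simp [hπQ_smul, ← hα]
  · have hJq : J • (R ∙ q) ≤ LinearMap.ker πQ := by
      rw [Submodule.smul_le]
      intro r hr n hn
      obtain ⟨c, rfl⟩ := mem_span_singleton.mp hn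
      rw [LinearMap.mem_ker, smul_smul, hπQ_smul, Ideal.Quotient.eq_zero_iff_mem]
      exact J.mul_mem_right c hr
    rintro _ ⟨x, hx, rfl⟩
    have hαx : α x ∈ I := by
      simpa [← hα, Ideal.Quotient.eq_zero_iff_mem] using hx
    have : α x • q ∈ (𝔞 * J) • (R ∙ q) := smul_mem_smul (hI hαx) (mem_span_singleton_self q)
    rw [Submodule.mul_smul] at this
    exact smul_mono_right _ hJq this

theorem Module.Projective.exists_lift_range_le_smul
    {P N M : Type*} [AddCommGroup P] [Module R P] [Module.Projective R P]
    [AddCommGroup N] [Module R N] [AddCommGroup M] [Module R M]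
    (𝔞 : Ideal R) (d : N →ₗ[R] M) (g : P →ₗ[R] M)
    (hg : LinearMap.range g ≤ 𝔞 • LinearMap.range d) :
    ∃ φ : P →ₗ[R] N, d ∘ₗ φ = g ∧ LinearMap.range φ ≤ 𝔞 • ⊤ := by
  set τ := d ∘ₗ (𝔞 • ⊤ : Submodule R N).subtype
  have hτ : LinearMap.range τ = 𝔞 • LinearMap.range d := by
    rw [LinearMap.range_comp, range_subtype, map_smul'', Submodule.map_top]
  obtain ⟨h, hh⟩ := Module.projective_lifting_property τ.rangeRestrict
    (g.codRestrict (LinearMap.range τ) fun x => hτ ▸ hg ⟨x, rfl⟩) τ.surjective_rangeRestrict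
  refine ⟨(𝔞 • ⊤ : Submodule R N).subtype ∘ₗ h, ?_, ?_⟩
  · ext x
    exact congrArg Subtype.val (LinearMap.congr_fun hh x)
  · rintro _ ⟨x, rfl⟩
    exact (h x).2

theorem LinearMap.lTensor_eq_zero_of_range_le_smul {M N P : Type*}
    [AddCommGroup M] [Module R M] [AddCommGroup N] [Module R N] [AddCommGroup P] [Module R P]
    {𝔞 : Ideal R} (hM : Module.IsTorsionBySet R M 𝔞) (f : N →ₗ[R] P)
    (hf : LinearMap.range f ≤ 𝔞 • ⊤) : f.lTensor M = 0 := by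
  refine TensorProduct.ext' fun m n => ?_
  rw [LinearMap.lTensor_tmul, LinearMap.zero_apply]
  refine smul_induction_on (p := fun y => m ⊗ₜ[R] y = 0) (hf ⟨n, rfl⟩)
    (fun a ha p _ => ?_) (fun u v hu hv => ?_)
  · rw [TensorProduct.tmul_smul, TensorProduct.smul_tmul', hM (a := ⟨a, ha⟩),
      TensorProduct.zero_tmul]
  · rw [TensorProduct.tmul_add, hu, hv, add_zero]

end

open Limits

theorem HomologicalComplex.homologyMap_eq_zero_of_f_eq_zero {C ι : Type*} [Category C] [Abelian C]
    {c : ComplexShape ι} {K L : HomologicalComplex C c} (φ : K ⟶ L) (i : ι) (h : φ.f i = 0) :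
    homologyMap φ i = 0 := by
  have hcycles : cyclesMap φ i = 0 := by
    rw [← cancel_mono (L.iCycles i), cyclesMap_i, h, comp_zero, zero_comp]
  rw [← cancel_epi (K.homologyπ i), homologyπ_naturality, hcycles, zero_comp, comp_zero]

theorem ProjectiveResolution.exists_hom_with_f_zero_f_one {C : Type*} [Category C] [Abelian C]
    {Y Z : C} (P : ProjectiveResolution Y) (Q : ProjectiveResolution Z)
    (φ₀ : P.complex.X 0 ⟶ Q.complex.X 0) (φ₁ : P.complex.X 1 ⟶ Q.complex.X 1)
    (w : φ₁ ≫ Q.complex.d 1 0 = P.complex.d 1 0 ≫ φ₀) :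
    ∃ φ : P.complex ⟶ Q.complex, φ.f 0 = φ₀ ∧ φ.f 1 = φ₁ :=
  ⟨ChainComplex.mkHom _ _ φ₀ φ₁ w fun n ⟨g, g', w⟩ =>
    ⟨(ProjectiveResolution.liftFSucc P Q n g g' w).1,
      (ProjectiveResolution.liftFSucc P Q n g g' w).2⟩, rfl, rfl⟩

section

variable {R : Type} [CommRing R]

theorem ProjectiveResolution.exists_lift_quotient_map_f_one_range_le_smul
    {𝔞 I J : Ideal R} (hI : I ≤ 𝔞 * J)
    (P : ProjectiveResolution (ModuleCat.of R (R ⧸ I)))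
    (Q : ProjectiveResolution (ModuleCat.of R (R ⧸ J))) :
    ∃ φ : P.complex ⟶ Q.complex,
      φ.f 0 ≫ Q.π.f 0 = P.π.f 0 ≫
        ModuleCat.ofHom (Submodule.mapQ I J LinearMap.id (hI.trans Ideal.mul_le_right : I ≤ J)) ∧
      LinearMap.range (φ.f 1).hom ≤ 𝔞 • ⊤ := by
  have : Module.Projective R (P.complex.X 0) := (IsProjective.iff_projective _).mpr (P.projective 0)
  have : Module.Projective R (P.complex.X 1) := (IsProjective.iff_projective _).mpr (P.projective 1)
  obtain ⟨φ₀, hφ₀, hker⟩ := Module.Projective.exists_lift_mapQ_map_ker_le_smul_ker hI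
    (P.π.f 0).hom (Q.π.f 0).hom ((ModuleCat.epi_iff_surjective _).mp inferInstance)
  have hrange : LinearMap.range (φ₀ ∘ₗ (P.complex.d 1 0).hom) ≤
      𝔞 • LinearMap.range (Q.complex.d 1 0).hom := by
    rw [LinearMap.range_comp, P.exact₀.moduleCat_range_eq_ker, Q.exact₀.moduleCat_range_eq_ker]
    exact hker
  obtain ⟨φ₁, hφ₁, hφ₁_range⟩ := Module.Projective.exists_lift_range_le_smul 𝔞 _ _ hrange
  obtain ⟨φ, hf₀, hf₁⟩ := ProjectiveResolution.exists_hom_with_f_zero_f_one P Q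
    (ModuleCat.ofHom φ₀) (ModuleCat.ofHom φ₁) (ModuleCat.hom_ext hφ₁)
  exact ⟨φ, hf₀ ▸ ModuleCat.hom_ext hφ₀, hf₁ ▸ hφ₁_range⟩

end

theorem tor_one_map_quotient_eq_zero {R : Type} [CommRing R] (M : Type) [AddCommGroup M]
    [Module R M] {𝔞 I J : Ideal R} (hM : Module.IsTorsionBySet R M 𝔞) (hI : I ≤ 𝔞 * J) :
    ((Tor (ModuleCat R) 1).obj (ModuleCat.of R M)).map
      (ModuleCat.ofHom (Submodule.mapQ I J LinearMap.id (hI.trans Ideal.mul_le_right : I ≤ J))) =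
      0 := by
  set P := ProjectiveResolution.of (ModuleCat.of R (R ⧸ I))
  set Q := ProjectiveResolution.of (ModuleCat.of R (R ⧸ J))
  set F := (MonoidalCategory.tensoringLeft (ModuleCat R)).obj (ModuleCat.of R M)
  obtain ⟨φ, hφ₀, hφ₁⟩ :=
    ProjectiveResolution.exists_lift_quotient_map_f_one_range_le_smul hI P Q
  have hFφ₁ : F.map (φ.f 1) = 0 :=
    ModuleCat.hom_ext ((φ.f 1).hom.lTensor_eq_zero_of_range_le_smul hM hφ₁)
  have hHφ : (F.mapHomologicalComplex _ ⋙ HomologicalComplex.homologyFunctor _ _ 1).map φ = 0 :=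
    HomologicalComplex.homologyMap_eq_zero_of_f_eq_zero _ 1 hFφ₁
  have hnat := P.isoLeftDerivedObj_hom_naturality _ Q φ hφ₀ F 1
  rwa [hHφ, comp_zero, ← Iso.eq_comp_inv, zero_comp] at hnat

theorem nu_one_eq_zero_general (R : Type) [CommRing R] [IsLocalRing R] (n : ℕ) :
    nuMap R (R ⧸ maximalIdeal R) 1 n = 0 := by
  have hk : Module.IsTorsionBySet R (R ⧸ maximalIdeal R) (maximalIdeal R) :=
    (Module.isTorsionBySet_quotient_iff _ _).mpr fun x _ hr => Ideal.mul_mem_right x _ hr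
  exact tor_one_map_quotient_eq_zero _ hk (pow_succ' _ n).le

/-- `ν^n_1(k) = 0` for all `n ≥ 0`. -/
theorem nu_one_eq_zero (R : Type) [CommRing R] [IsLocalRing R] [IsNoetherianRing R]
    (hm : maximalIdeal R ≠ ⊥) (n : ℕ) :
    nuMap R (R ⧸ maximalIdeal R) 1 n = 0 :=
  nu_one_eq_zero_general R n
end

section
/- Let (R,𝔪,k) be a commutative Noetherian local ring with 𝔪 ≠ 0 and let x ∈ 𝔪 ∖ 𝔪^2 be a strictly regular element, i.e. x is a nonzerodivisor on R whose initial form is a nonzerodivisor on gr_𝔪(R) (equivalently, x is a nonzerodivisor and (𝔪^{n+1} : x) ⊆ 𝔪^n for all n ≥ 0). Then ld_R(k) = ld_{R/(x)}(k). -/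
/-!
Following Şega, both linearity defects are read off from the maps
`ν^n_i : Tor_i(k, R/𝔪^{n+1}) → Tor_i(k, R/𝔪^n)`: `H_i(lin F) = 0` for all `i > d` iff `ν^n_i = 0`
for all `i > d` and all `n`, and `ν` may be computed on any projective resolution of `k`.

Over `R̄ = R/(x)`, take a minimal resolution `G` of `k`, let `G̃_i` be the free `R`-module of
the rank of `G_i`, and lift the differentials of `G` to maps `D`. Since `D ∘ D ≡ 0` modulo `x`,
`D ∘ D = x S` for some `S`; as `x` is a nonzerodivisor, `C_i = G̃_i ⊕ G̃_{i-1}` with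
`∂(a, b) = (D a + x b, -(S a + D b))` is then a free resolution of `k` over `R`.

Reduction modulo `x` matches the first components of `C` with `G`, and the condition
`(𝔪^{n+1} : x) ⊆ 𝔪^n` controls the second ones: if `a ∈ 𝔪^n` and `D a + x b ∈ 𝔪^{n+1}`, then
`b ∈ 𝔪^n`. Hence `ν` vanishes on `C` iff it does on `G`.
-/

open CategoryTheory IsLocalRing

/-- A minimal free resolution `⋯ → F_{i+1} → F_i → ⋯ → F_0 → M → 0` of an `R`-module `M`
by finitely generated free `R`-modules `F_i = R^{rk i}`, with `∂(F_{i+1}) ⊆ 𝔪 F_i`. -/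
structure MinFreeRes (R : Type) [CommRing R] [IsLocalRing R]
    (M : Type) [AddCommGroup M] [Module R M] where
  rk : ℕ → ℕ
  d : ∀ i : ℕ, (Fin (rk (i + 1)) → R) →ₗ[R] (Fin (rk i) → R)
  aug : (Fin (rk 0) → R) →ₗ[R] M
  aug_surj : Function.Surjective aug
  exact_aug : Function.Exact (d 0) aug
  exact : ∀ i : ℕ, Function.Exact (d (i + 1)) (d i)
  minimal : ∀ i : ℕ, LinearMap.range (d i) ≤ (maximalIdeal R) • ⊤

/-- The submodule `𝔪^s F_i` of the `i`-th module of a minimal free resolution. -/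
def MinFreeRes.pw {R : Type} [CommRing R] [IsLocalRing R]
    {M : Type} [AddCommGroup M] [Module R M] (F : MinFreeRes R M) (s i : ℕ) :
    Submodule R (Fin (F.rk i) → R) :=
  (maximalIdeal R) ^ s • ⊤

/-- Vanishing of the homology of the linear part `lin^R(F)` of a minimal free resolution `F`
in homological degree `i` (in all internal degrees), expressed elementwise (with the
convention `𝔪^{-1} = R`). -/
def MinFreeRes.linHZero {R : Type} [CommRing R] [IsLocalRing R]
    {M : Type} [AddCommGroup M] [Module R M] (F : MinFreeRes R M) : ℕ → Prop
  | 0 => ∀ s : ℕ, ∀ x : Fin (F.rk 0) → R, x ∈ F.pw s 0 →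
      ∃ y ∈ F.pw (s - 1) 1, x - F.d 0 y ∈ F.pw (s + 1) 0
  | (j + 1) => ∀ s : ℕ, ∀ x : Fin (F.rk (j + 1)) → R, x ∈ F.pw s (j + 1) →
      F.d j x ∈ F.pw (s + 2) j →
      ∃ y ∈ F.pw (s - 1) (j + 2), x - F.d (j + 1) y ∈ F.pw (s + 1) (j + 1)

/-- The linearity defect `ld_R(M) = sup { i | H_i(lin^R(F)) ≠ 0 }`, computed from a minimal
free resolution `F` of `M`. -/
noncomputable def MinFreeRes.ldefect {R : Type} [CommRing R] [IsLocalRing R]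
    {M : Type} [AddCommGroup M] [Module R M] (F : MinFreeRes R M) : ℕ∞ :=
  sSup ((fun i : ℕ => (i : ℕ∞)) '' {i : ℕ | ¬ F.linHZero i})

section SmulTop

variable {R : Type*} [CommRing R]

theorem Ideal.mem_smul_top_pi_iff (I : Ideal R) {ι : Type*} [Fintype ι] {v : ι → R} :
    v ∈ (I • ⊤ : Submodule R (ι → R)) ↔ ∀ k, v k ∈ I := by
  classical
  refine ⟨fun hv k => ?_, fun h => ?_⟩
  · exact Submodule.smul_induction_on (p := fun v => v k ∈ I) hv
      (fun r hr _ _ => I.mul_mem_right _ hr) fun _ _ => I.add_mem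
  · rw [pi_eq_sum_univ' v]
    exact Submodule.sum_mem _ fun k _ => Submodule.smul_mem_smul (h k) Submodule.mem_top

theorem Ideal.mem_smul_top_prod_iff (I : Ideal R) {M N : Type*} [AddCommGroup M] [Module R M]
    [AddCommGroup N] [Module R N] {w : M × N} :
    w ∈ (I • ⊤ : Submodule R (M × N)) ↔
      w.1 ∈ (I • ⊤ : Submodule R M) ∧ w.2 ∈ (I • ⊤ : Submodule R N) := by
  refine ⟨fun hw => ⟨Submodule.smul_top_le_comap_smul_top I (LinearMap.fst R M N) hw,
    Submodule.smul_top_le_comap_smul_top I (LinearMap.snd R M N) hw⟩, fun ⟨h₁, h₂⟩ => ?_⟩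
  have hw : w = LinearMap.inl R M N w.1 + LinearMap.inr R M N w.2 := by simp
  rw [hw]
  exact add_mem (Submodule.smul_top_le_comap_smul_top I _ h₁)
    (Submodule.smul_top_le_comap_smul_top I _ h₂)

theorem LinearMap.map_mem_pow_succ_smul_top {I : Ideal R} {M N : Type*} [AddCommGroup M]
    [Module R M] [AddCommGroup N] [Module R N] (f : M →ₗ[R] N) (hf : range f ≤ I • ⊤) {s : ℕ}
    {v : M} (hv : v ∈ (I ^ s • ⊤ : Submodule R M)) : f v ∈ (I ^ (s + 1) • ⊤ : Submodule R N) := by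
  have hfv : f v ∈ (I ^ s • ⊤ : Submodule R M).map f := Submodule.mem_map_of_mem hv
  rw [Submodule.map_smul'', Submodule.map_top] at hfv
  rw [pow_succ, Submodule.mul_smul]
  exact Submodule.smul_mono le_rfl hf hfv

theorem mem_smul_top_of_smul_mem {ι : Type*} [Fintype ι] {x : R} {J K : Ideal R}
    (hx : ∀ r, x * r ∈ J → r ∈ K) {v : ι → R} (h : x • v ∈ (J • ⊤ : Submodule R (ι → R))) :
    v ∈ (K • ⊤ : Submodule R (ι → R)) := by
  rw [Ideal.mem_smul_top_pi_iff] at h ⊢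
  exact fun k => hx _ (h k)

end SmulTop

section ProjectiveResolutions

theorem exists_seq_of_step {α : ℕ → Sort*} (r : ∀ i, α i → α (i + 1) → Prop) {a : α 0}
    {b : α 1} (hab : r 0 a b) (step : ∀ i u v, r i u v → ∃ w, r (i + 1) v w) :
    ∃ f : ∀ i, α i, f 0 = a ∧ ∀ i, r i (f i) (f (i + 1)) := by
  choose next hnext using step
  let g : ∀ i, Σ' (u : α i) (v : α (i + 1)), r i u v := fun i =>
    Nat.rec ⟨a, b, hab⟩ (fun i p => ⟨p.2.1, next i p.1 p.2.1 p.2.2, hnext i p.1 p.2.1 p.2.2⟩) i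
  exact ⟨fun i => (g i).1, rfl, fun i => (g i).2.2⟩

variable {R : Type*} [CommRing R]

theorem exists_lift_of_exact {X Y Z W : Type*} [AddCommGroup X] [Module R X]
    [Module.Projective R X] [AddCommGroup Y] [Module R Y] [AddCommGroup Z] [Module R Z]
    [AddCommGroup W] [Module R W] {q₁ : Z →ₗ[R] Y} {q₀ : Y →ₗ[R] W} (hq : Function.Exact q₁ q₀)
    (g : X →ₗ[R] Y) (hg : q₀ ∘ₗ g = 0) : ∃ f : X →ₗ[R] Z, q₁ ∘ₗ f = g := by
  have hrange : LinearMap.range g ≤ LinearMap.range q₁ :=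
    hq.linearMap_ker_eq ▸ LinearMap.range_le_ker_iff.mpr hg
  obtain ⟨f, hf⟩ := Module.projective_lifting_property q₁.rangeRestrict
    (g.codRestrict _ fun v => hrange ⟨v, rfl⟩) q₁.surjective_rangeRestrict
  exact ⟨f, LinearMap.ext fun v => congr($(LinearMap.congr_fun hf v).1)⟩

structure ProjRes (R : Type*) [CommRing R] (M : Type*) [AddCommGroup M] [Module R M] where
  X : ℕ → Type*
  [addCommGroup : ∀ i, AddCommGroup (X i)]
  [module : ∀ i, Module R (X i)]
  [projective : ∀ i, Module.Projective R (X i)]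
  d : ∀ i, X (i + 1) →ₗ[R] X i
  aug : X 0 →ₗ[R] M
  aug_surjective : Function.Surjective aug
  exact_aug : Function.Exact (d 0) aug
  exact : ∀ i, Function.Exact (d (i + 1)) (d i)

attribute [instance] ProjRes.addCommGroup ProjRes.module ProjRes.projective

namespace ProjRes

variable {M N : Type*} [AddCommGroup M] [Module R M] [AddCommGroup N] [Module R N]

theorem exists_chainMap (P : ProjRes R M) (Q : ProjRes R N) (f : M →ₗ[R] N) :
    ∃ φ : ∀ i, P.X i →ₗ[R] Q.X i,
      Q.aug ∘ₗ φ 0 = f ∘ₗ P.aug ∧ ∀ i, Q.d i ∘ₗ φ (i + 1) = φ i ∘ₗ P.d i := by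
  obtain ⟨φ₀, hφ₀⟩ := Module.projective_lifting_property Q.aug (f ∘ₗ P.aug) Q.aug_surjective
  obtain ⟨φ₁, hφ₁⟩ := exists_lift_of_exact Q.exact_aug (φ₀ ∘ₗ P.d 0) (by
    rw [← LinearMap.comp_assoc, hφ₀, LinearMap.comp_assoc,
      P.exact_aug.linearMap_comp_eq_zero, LinearMap.comp_zero])
  obtain ⟨φ, rfl, hφ⟩ := exists_seq_of_step
    (fun i (u : P.X i →ₗ[R] Q.X i) v => Q.d i ∘ₗ v = u ∘ₗ P.d i) hφ₁ fun i u v huv =>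
      exists_lift_of_exact (Q.exact i) _ (by
        rw [← LinearMap.comp_assoc, huv, LinearMap.comp_assoc,
          (P.exact i).linearMap_comp_eq_zero, LinearMap.comp_zero])
  exact ⟨φ, hφ₀, hφ⟩

theorem exists_homotopy (P : ProjRes R M) (θ : ∀ i, P.X i →ₗ[R] P.X i)
    (haug : P.aug ∘ₗ θ 0 = P.aug) (hθ : ∀ i, P.d i ∘ₗ θ (i + 1) = θ i ∘ₗ P.d i) :
    ∃ s : ∀ i, P.X i →ₗ[R] P.X (i + 1), P.d 0 ∘ₗ s 0 = θ 0 - LinearMap.id ∧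
      ∀ i, P.d (i + 1) ∘ₗ s (i + 1) = θ (i + 1) - LinearMap.id - s i ∘ₗ P.d i := by
  obtain ⟨s₀, hs₀⟩ := exists_lift_of_exact P.exact_aug (θ 0 - LinearMap.id) (by
    rw [LinearMap.comp_sub, haug, LinearMap.comp_id, sub_self])
  obtain ⟨s₁, hs₁⟩ := exists_lift_of_exact (P.exact 0) (θ 1 - LinearMap.id - s₀ ∘ₗ P.d 0) (by
    rw [LinearMap.comp_sub, LinearMap.comp_sub, hθ, ← LinearMap.comp_assoc, hs₀,
      LinearMap.sub_comp, LinearMap.comp_id, LinearMap.id_comp]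
    abel)
  obtain ⟨s, rfl, hs⟩ := exists_seq_of_step
    (fun i (u : P.X i →ₗ[R] P.X (i + 1)) v =>
      P.d (i + 1) ∘ₗ v = θ (i + 1) - LinearMap.id - u ∘ₗ P.d i) hs₁ fun i u v huv =>
      exists_lift_of_exact (P.exact (i + 1)) _ (by
        rw [LinearMap.comp_sub, LinearMap.comp_sub, hθ, ← LinearMap.comp_assoc, huv,
          LinearMap.sub_comp, LinearMap.sub_comp, LinearMap.comp_id, LinearMap.id_comp,
          LinearMap.comp_assoc, (P.exact i).linearMap_comp_eq_zero, LinearMap.comp_zero]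
        abel)
  exact ⟨s, hs₀, hs⟩

/-- For `I = 𝔪` this says, elementwise, that `ν^n_{j+1}` (`nuMap R M (j + 1) n`) vanishes, with
`Tor` computed from `P`: a cycle of `P ⊗ R/I^{n+1}` in degree `j + 1` becomes a boundary
in `P ⊗ R/I^n`. -/
def NuVanishes (P : ProjRes R M) (I : Ideal R) (j n : ℕ) : Prop :=
  ∀ z : P.X (j + 1), P.d j z ∈ (I ^ (n + 1) • ⊤ : Submodule R (P.X j)) →
    ∃ y, z - P.d (j + 1) y ∈ (I ^ n • ⊤ : Submodule R (P.X (j + 1)))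

theorem NuVanishes.of_linearEquiv {P : ProjRes R M} {Q : ProjRes R N} (e : M ≃ₗ[R] N)
    {I : Ideal R} {j n : ℕ} (h : Q.NuVanishes I j n) : P.NuVanishes I j n := by
  obtain ⟨φ, hφ₀, hφ⟩ := P.exists_chainMap Q e.toLinearMap
  obtain ⟨ψ, hψ₀, hψ⟩ := Q.exists_chainMap P e.symm.toLinearMap
  obtain ⟨s, -, hs⟩ := P.exists_homotopy (fun i => ψ i ∘ₗ φ i)
    (by rw [← LinearMap.comp_assoc, hψ₀, LinearMap.comp_assoc, hφ₀, ← LinearMap.comp_assoc,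
      e.symm_comp, LinearMap.id_comp])
    (fun i => by rw [← LinearMap.comp_assoc, hψ, LinearMap.comp_assoc, hφ, LinearMap.comp_assoc])
  intro z hz
  obtain ⟨y, hy⟩ := h (φ (j + 1) z) (by
    rw [← LinearMap.comp_apply, hφ, LinearMap.comp_apply]
    exact Submodule.smul_top_le_comap_smul_top _ (φ j) hz)
  refine ⟨ψ (j + 2) y - s (j + 1) z, ?_⟩
  -- the homotopy `ψ φ ≃ id` moves `z` into the class of `ψ φ z`
  have hsz := LinearMap.congr_fun (hs j) z
  have hψy := LinearMap.congr_fun (hψ (j + 1)) y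
  simp only [LinearMap.comp_apply, LinearMap.sub_apply, LinearMap.id_apply] at hsz hψy
  have hz' : z - P.d (j + 1) (ψ (j + 2) y - s (j + 1) z) =
      ψ (j + 1) (φ (j + 1) z - Q.d (j + 1) y) - s j (P.d j z) := by
    rw [map_sub, map_sub, hsz, hψy]
    abel
  rw [hz']
  exact sub_mem (Submodule.smul_top_le_comap_smul_top _ _ hy)
    (Submodule.smul_mono_left (Ideal.pow_le_pow_right n.le_succ)
      (Submodule.smul_top_le_comap_smul_top _ (s j) hz))

theorem nuVanishes_iff_of_linearEquiv {P : ProjRes R M} {Q : ProjRes R N}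
    (e : M ≃ₗ[R] N) {I : Ideal R} {j n : ℕ} : P.NuVanishes I j n ↔ Q.NuVanishes I j n :=
  ⟨.of_linearEquiv e.symm, .of_linearEquiv e⟩

end ProjRes

end ProjectiveResolutions

theorem ENat.eq_of_forall_le_natCast_iff {m n : ℕ∞} (h : ∀ d : ℕ, m ≤ d ↔ n ≤ d) : m = n :=
  le_antisymm (WithTop.forall_le_coe_iff_le.mp fun d hd => (h d).mpr hd)
    (WithTop.forall_le_coe_iff_le.mp fun d hd => (h d).mp hd)

namespace MinFreeRes

variable {R M : Type} [CommRing R] [IsLocalRing R] [AddCommGroup M] [Module R M]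
  (F : MinFreeRes R M)

abbrev toProjRes : ProjRes R M where
  X i := Fin (F.rk i) → R
  d := F.d
  aug := F.aug
  aug_surjective := F.aug_surj
  exact_aug := F.exact_aug
  exact := F.exact

theorem nuVanishes_of_linHZero {j : ℕ} (h : F.linHZero (j + 1)) (n : ℕ) :
    F.toProjRes.NuVanishes (maximalIdeal R) j n := by
  induction n with
  | zero => exact fun z _ => ⟨0, by simp only [pow_zero, Ideal.one_eq_top, Submodule.top_smul,
      Submodule.mem_top]⟩
  | succ n ih =>
    intro z hz
    obtain ⟨y, hy⟩ := ih z (Submodule.smul_mono_left (Ideal.pow_le_pow_right n.succ.le_succ) hz)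
    obtain ⟨y', -, hy'⟩ := h n (z - F.d (j + 1) y) hy (by
      rwa [map_sub, (F.exact j).apply_apply_eq_zero, sub_zero])
    exact ⟨y + y', by rwa [map_add, ← sub_sub]⟩

theorem linHZero_of_nuVanishes {j : ℕ} (h₀ : ∀ n, F.toProjRes.NuVanishes (maximalIdeal R) j n)
    (h₁ : ∀ n, F.toProjRes.NuVanishes (maximalIdeal R) (j + 1) n) : F.linHZero (j + 1) := by
  intro s z hz hdz
  obtain ⟨y, hy⟩ := h₀ (s + 1) z hdz
  cases s with
  | zero => exact ⟨y, by simp only [pw, Nat.zero_sub, pow_zero, Ideal.one_eq_top,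
      Submodule.top_smul, Submodule.mem_top], hy⟩
  | succ s =>
    have hdy : F.d (j + 1) y ∈ F.pw (s + 1) (j + 1) := by
      simpa only [sub_sub_cancel] using
        sub_mem hz (Submodule.smul_mono_left (Ideal.pow_le_pow_right (s + 1).le_succ) hy)
    obtain ⟨y', hy'⟩ := h₁ s y hdy
    refine ⟨y - F.d (j + 2) y', hy', ?_⟩
    rwa [map_sub, (F.exact (j + 1)).apply_apply_eq_zero, sub_zero]

theorem tail_linHZero_iff (d : ℕ) : (∀ i, d < i → F.linHZero i) ↔
    ∀ j, d ≤ j → ∀ n, F.toProjRes.NuVanishes (maximalIdeal R) j n := by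
  refine ⟨fun h j hj => F.nuVanishes_of_linHZero (h (j + 1) (by omega)), ?_⟩
  rintro h (_ | j) hj
  · omega
  · exact F.linHZero_of_nuVanishes (h j (by omega)) (h (j + 1) (by omega))

theorem ldefect_le_iff (d : ℕ) : F.ldefect ≤ d ↔ ∀ i, d < i → F.linHZero i := by
  simp only [ldefect, sSup_le_iff, Set.forall_mem_image, Set.mem_ofPred_eq, Nat.cast_le]
  exact forall_congr' fun i => not_imp_comm.trans (by rw [not_le])

end MinFreeRes

section Quotient

variable {R : Type*} [CommRing R]

def reduceMod (I : Ideal R) (ι : Type*) : (ι → R) →ₗ[R] ι → R ⧸ I :=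
  (Ideal.Quotient.mkₐ R I).toLinearMap.compLeft ι

@[simp]
theorem reduceMod_apply (I : Ideal R) {ι : Type*} (v : ι → R) (k : ι) :
    reduceMod I ι v k = Ideal.Quotient.mk I (v k) :=
  rfl

theorem reduceMod_surjective (I : Ideal R) (ι : Type*) : Function.Surjective (reduceMod I ι) :=
  Ideal.Quotient.mk_surjective.comp_left

@[simp]
theorem reduceMod_smul_self (x : R) {ι : Type*} (v : ι → R) :
    reduceMod (Ideal.span {x}) ι (x • v) = 0 := by
  ext k
  simp

theorem exact_smul_reduceMod (x : R) (ι : Type*) :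
    Function.Exact (x • LinearMap.id : (ι → R) →ₗ[R] ι → R) (reduceMod (Ideal.span {x}) ι) := by
  refine fun v => ⟨fun hv => ?_, fun ⟨u, hu⟩ => hu ▸ reduceMod_smul_self x u⟩
  have hv' : ∀ k, ∃ c, c * x = v k := fun k =>
    Ideal.mem_span_singleton'.mp (Ideal.Quotient.eq_zero_iff_mem.mp (congrFun hv k))
  choose u hu using hv'
  exact ⟨u, funext fun k => by simp [← hu k, mul_comm]⟩

theorem reduceMod_mem_map_smul_top_iff (x : R) {ι : Type*} [Fintype ι] (J : Ideal R)
    {v : ι → R} :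
    reduceMod (Ideal.span {x}) ι v ∈ (J.map (Ideal.Quotient.mk (Ideal.span {x})) • ⊤ :
        Submodule (R ⧸ Ideal.span {x}) (ι → R ⧸ Ideal.span {x})) ↔
      ∃ p ∈ (J • ⊤ : Submodule R (ι → R)), ∃ u, v = p + x • u := by
  simp only [Ideal.mem_smul_top_pi_iff, reduceMod_apply, Ideal.mem_quotient_iff_mem_sup,
    sup_comm J, Ideal.mem_span_singleton_sup]
  constructor
  · intro h
    choose u p hp hv using h
    exact ⟨p, hp, u, funext fun k => by simp [← hv k, add_comm, mul_comm]⟩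
  · rintro ⟨p, hp, u, rfl⟩ k
    exact ⟨u k, p k, hp k, by simp [add_comm, mul_comm]⟩

variable [IsLocalRing R] (I : Ideal R) [IsLocalRing (R ⧸ I)]

theorem IsLocalRing.comap_mk_maximalIdeal :
    (maximalIdeal (R ⧸ I)).comap (Ideal.Quotient.mk I) = maximalIdeal R :=
  have := IsLocalHom.of_surjective _ (Ideal.Quotient.mk_surjective (I := I))
  maximalIdeal_comap _

theorem IsLocalRing.maximalIdeal_quotient_pow (s : ℕ) :
    maximalIdeal (R ⧸ I) ^ s = (maximalIdeal R ^ s).map (Ideal.Quotient.mk I) := by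
  rw [Ideal.map_pow, map_maximalIdeal_of_surjective _ Ideal.Quotient.mk_surjective]

noncomputable def residueFieldQuotientEquiv :
    ((R ⧸ I) ⧸ maximalIdeal (R ⧸ I)) ≃ₗ[R] R ⧸ maximalIdeal R :=
  ((Ideal.quotientEquivAlgOfEq R (J := (maximalIdeal R).map (Ideal.Quotient.mkₐ R I))
    (map_maximalIdeal_of_surjective _ (Ideal.Quotient.mkₐ_surjective R I)).symm).trans
    (DoubleQuot.quotQuotEquivQuotOfLEₐ R
      (le_maximalIdeal (Ideal.Quotient.nontrivial_iff.mp inferInstance)))).toLinearEquiv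

end Quotient

namespace MinFreeRes

section

variable {R : Type} [CommRing R] {x : R} [IsLocalRing (R ⧸ Ideal.span {x})]
  {N : Type} [AddCommGroup N] [Module (R ⧸ Ideal.span {x}) N]
  (G : MinFreeRes (R ⧸ Ideal.span {x}) N)

theorem exists_liftD (i : ℕ) : ∃ D : (Fin (G.rk (i + 1)) → R) →ₗ[R] Fin (G.rk i) → R,
    reduceMod _ _ ∘ₗ D = (G.d i).restrictScalars R ∘ₗ reduceMod _ _ :=
  Module.projective_lifting_property _ _ (reduceMod_surjective _ _)

noncomputable def liftD (i : ℕ) : (Fin (G.rk (i + 1)) → R) →ₗ[R] Fin (G.rk i) → R :=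
  (G.exists_liftD i).choose

theorem reduceMod_liftD (i : ℕ) (v : Fin (G.rk (i + 1)) → R) :
    reduceMod _ _ (G.liftD i v) = G.d i (reduceMod _ _ v) :=
  LinearMap.congr_fun (G.exists_liftD i).choose_spec v

theorem exists_liftS (i : ℕ) : ∃ S : (Fin (G.rk (i + 2)) → R) →ₗ[R] Fin (G.rk i) → R,
    (x • LinearMap.id) ∘ₗ S = G.liftD i ∘ₗ G.liftD (i + 1) :=
  exists_lift_of_exact (exact_smul_reduceMod x _) _ (LinearMap.ext fun v => by
    simp [reduceMod_liftD, (G.exact i).apply_apply_eq_zero])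

noncomputable def liftS (i : ℕ) : (Fin (G.rk (i + 2)) → R) →ₗ[R] Fin (G.rk i) → R :=
  (G.exists_liftS i).choose

theorem smul_liftS (i : ℕ) (v : Fin (G.rk (i + 2)) → R) :
    x • G.liftS i v = G.liftD i (G.liftD (i + 1) v) :=
  LinearMap.congr_fun (G.exists_liftS i).choose_spec v

abbrev prevRk : ℕ → ℕ
  | 0 => 0
  | i + 1 => G.rk i

abbrev LiftResX (i : ℕ) : Type := (Fin (G.rk i) → R) × (Fin (G.prevRk i) → R)

noncomputable def liftResD : ∀ i, G.LiftResX (i + 1) →ₗ[R] G.LiftResX i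
  | 0 => (G.liftD 0 ∘ₗ LinearMap.fst R _ _ + x • LinearMap.snd R _ _).prod 0
  | i + 1 => (G.liftD (i + 1) ∘ₗ LinearMap.fst R _ _ + x • LinearMap.snd R _ _).prod
      (-(G.liftS i ∘ₗ LinearMap.fst R _ _ + G.liftD i ∘ₗ LinearMap.snd R _ _))

theorem liftResD_fst (i : ℕ) (w : G.LiftResX (i + 1)) :
    (G.liftResD i w).1 = G.liftD i w.1 + x • w.2 := by
  cases i <;> rfl

theorem liftResD_snd (i : ℕ) (w : G.LiftResX (i + 2)) :
    (G.liftResD (i + 1) w).2 = -(G.liftS i w.1 + G.liftD i w.2) :=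
  rfl

theorem reduceMod_liftResD_fst (i : ℕ) (w : G.LiftResX (i + 1)) :
    reduceMod _ _ (G.liftResD i w).1 = G.d i (reduceMod _ _ w.1) := by
  rw [liftResD_fst, map_add, reduceMod_liftD, reduceMod_smul_self, add_zero]

theorem liftResD_liftResD_fst (i : ℕ) (w : G.LiftResX (i + 2)) :
    (G.liftResD i (G.liftResD (i + 1) w)).1 = 0 := by
  rw [liftResD_fst, liftResD_fst, liftResD_snd, map_add, map_smul, ← smul_liftS]
  module

theorem eq_zero_of_fst_eq_zero (hnzd : x ∈ nonZeroDivisors R) {i : ℕ} {w : G.LiftResX (i + 1)}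
    (h₁ : w.1 = 0) (h₂ : (G.liftResD i w).1 = 0) : w = 0 := by
  rw [liftResD_fst, h₁, map_zero, zero_add] at h₂
  exact Prod.ext h₁ (funext fun k => (mul_left_mem_nonZeroDivisors_eq_zero_iff hnzd).mp
    (congrFun h₂ k))

theorem liftResD_liftResD (hnzd : x ∈ nonZeroDivisors R) (i : ℕ) (w : G.LiftResX (i + 2)) :
    G.liftResD i (G.liftResD (i + 1) w) = 0 := by
  cases i with
  | zero => exact Prod.ext (G.liftResD_liftResD_fst 0 w) (Subsingleton.elim _ _)
  | succ i =>
    exact G.eq_zero_of_fst_eq_zero hnzd (G.liftResD_liftResD_fst _ w)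
      (G.liftResD_liftResD_fst _ _)

theorem exists_liftResD_fst_eq (i : ℕ) {a : Fin (G.rk i) → R}
    (ha : reduceMod _ _ a ∈ Set.range (G.d i)) : ∃ y, (G.liftResD i y).1 = a := by
  obtain ⟨c', hc'⟩ := ha
  obtain ⟨c, rfl⟩ := reduceMod_surjective _ _ c'
  obtain ⟨e, he⟩ := (exact_smul_reduceMod x _ (a - G.liftD i c)).mp (by
    rw [map_sub, reduceMod_liftD, hc', sub_self])
  refine ⟨(c, e), ?_⟩
  rw [liftResD_fst]
  exact eq_sub_iff_add_eq'.mp he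

theorem exact_liftResD (hnzd : x ∈ nonZeroDivisors R) (i : ℕ) :
    Function.Exact (G.liftResD (i + 1)) (G.liftResD i) := by
  refine fun w => ⟨fun hw => ?_, fun ⟨y, hy⟩ => hy ▸ G.liftResD_liftResD hnzd i y⟩
  obtain ⟨y, hy⟩ := G.exists_liftResD_fst_eq (i + 1) ((G.exact i _).mp (by
    rw [← reduceMod_liftResD_fst, hw, Prod.fst_zero, map_zero]))
  refine ⟨y, (sub_eq_zero.mp (G.eq_zero_of_fst_eq_zero hnzd ?_ ?_)).symm⟩
  · rw [Prod.fst_sub, hy, sub_self]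
  · rw [map_sub, G.liftResD_liftResD hnzd, sub_zero, hw, Prod.fst_zero]

variable [Module R N] [IsScalarTower R (R ⧸ Ideal.span {x}) N]

noncomputable abbrev liftRes (hnzd : x ∈ nonZeroDivisors R) : ProjRes R N where
  X := G.LiftResX
  d := G.liftResD
  aug := G.aug.restrictScalars R ∘ₗ reduceMod _ _ ∘ₗ LinearMap.fst R _ _
  aug_surjective := G.aug_surj.comp ((reduceMod_surjective _ _).comp LinearMap.fst_surjective)
  exact_aug w := by
    refine ⟨fun hw => ?_, ?_⟩
    · obtain ⟨y, hy⟩ := G.exists_liftResD_fst_eq 0 ((G.exact_aug _).mp hw)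
      exact ⟨y, Prod.ext hy (Subsingleton.elim _ _)⟩
    · rintro ⟨y, rfl⟩
      exact (congrArg G.aug (G.reduceMod_liftResD_fst 0 y)).trans
        (G.exact_aug.apply_apply_eq_zero _)
  exact := G.exact_liftResD hnzd

end

section

variable {R : Type} [CommRing R] [IsLocalRing R] {x : R} [IsLocalRing (R ⧸ Ideal.span {x})]
  {N : Type} [AddCommGroup N] [Module (R ⧸ Ideal.span {x}) N]
  (G : MinFreeRes (R ⧸ Ideal.span {x}) N)

theorem range_liftD_le (i : ℕ) : LinearMap.range (G.liftD i) ≤ maximalIdeal R • ⊤ := by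
  rintro _ ⟨v, rfl⟩
  have hv := (Ideal.mem_smul_top_pi_iff _).mp (G.minimal i ⟨reduceMod _ _ v, rfl⟩)
  refine (Ideal.mem_smul_top_pi_iff _).mpr fun k => ?_
  rw [← IsLocalRing.comap_mk_maximalIdeal (Ideal.span {x}), Ideal.mem_comap, ← reduceMod_apply,
    reduceMod_liftD]
  exact hv k

theorem mem_pow_smul_top_of_liftResD_fst
    (hstrict : ∀ n : ℕ, ∀ r : R, x * r ∈ maximalIdeal R ^ (n + 1) → r ∈ maximalIdeal R ^ n)
    {i n : ℕ} {w : G.LiftResX (i + 1)} (h₁ : w.1 ∈ (maximalIdeal R ^ n • ⊤ : Submodule R _))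
    (h₂ : (G.liftResD i w).1 ∈ (maximalIdeal R ^ (n + 1) • ⊤ : Submodule R _)) :
    w ∈ (maximalIdeal R ^ n • ⊤ : Submodule R (G.LiftResX (i + 1))) := by
  refine (Ideal.mem_smul_top_prod_iff _).mpr ⟨h₁, mem_smul_top_of_smul_mem (hstrict n) ?_⟩
  rw [← add_sub_cancel_left (G.liftD i w.1) (x • w.2), ← liftResD_fst]
  exact sub_mem h₂ ((G.liftD i).map_mem_pow_succ_smul_top (G.range_liftD_le i) h₁)

theorem liftResD_mem_of_fst_mem
    (hstrict : ∀ n : ℕ, ∀ r : R, x * r ∈ maximalIdeal R ^ (n + 1) → r ∈ maximalIdeal R ^ n)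
    {j n : ℕ} {w : G.LiftResX (j + 1)}
    (h : (G.liftResD j w).1 ∈ (maximalIdeal R ^ (n + 1) • ⊤ : Submodule R _)) :
    G.liftResD j w ∈ (maximalIdeal R ^ (n + 1) • ⊤ : Submodule R (G.LiftResX j)) := by
  cases j with
  | zero =>
    refine (Ideal.mem_smul_top_prod_iff _).mpr ⟨h, ?_⟩
    rw [Subsingleton.elim (G.liftResD 0 w).2 0]
    exact zero_mem _
  | succ j =>
    refine G.mem_pow_smul_top_of_liftResD_fst hstrict h ?_
    rw [liftResD_liftResD_fst]
    exact zero_mem _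

variable [Module R N] [IsScalarTower R (R ⧸ Ideal.span {x}) N]

theorem nuVanishes_liftRes_of_nuVanishes (hnzd : x ∈ nonZeroDivisors R)
    (hstrict : ∀ n : ℕ, ∀ r : R, x * r ∈ maximalIdeal R ^ (n + 1) → r ∈ maximalIdeal R ^ n)
    {j n : ℕ} (h : G.toProjRes.NuVanishes (maximalIdeal _) j n) :
    (G.liftRes hnzd).NuVanishes (maximalIdeal R) j n := by
  intro z hz
  have hz₁ : (G.liftResD j z).1 ∈ (maximalIdeal R ^ (n + 1) • ⊤ : Submodule R _) :=
    ((Ideal.mem_smul_top_prod_iff _).mp hz).1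
  have hGz : G.d j (reduceMod _ _ z.1) ∈ G.pw (n + 1) j := by
    rw [pw, ← reduceMod_liftResD_fst, IsLocalRing.maximalIdeal_quotient_pow,
      reduceMod_mem_map_smul_top_iff]
    exact ⟨_, hz₁, 0, by rw [smul_zero, add_zero]⟩
  obtain ⟨c', hc'⟩ := h _ hGz
  obtain ⟨c, rfl⟩ := reduceMod_surjective _ _ c'
  have hc : reduceMod _ _ (z.1 - G.liftD (j + 1) c) ∈ G.pw n (j + 1) := by
    rwa [map_sub, reduceMod_liftD]
  rw [pw, IsLocalRing.maximalIdeal_quotient_pow, reduceMod_mem_map_smul_top_iff] at hc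
  obtain ⟨p, hp, u, hpu⟩ := hc
  refine ⟨(c, u), G.mem_pow_smul_top_of_liftResD_fst hstrict ?_ ?_⟩
  · rwa [Prod.fst_sub, liftResD_fst, ← sub_sub, hpu, add_sub_cancel_right]
  · rwa [map_sub, G.liftResD_liftResD hnzd, sub_zero]

theorem nuVanishes_of_nuVanishes_liftRes (hnzd : x ∈ nonZeroDivisors R)
    (hstrict : ∀ n : ℕ, ∀ r : R, x * r ∈ maximalIdeal R ^ (n + 1) → r ∈ maximalIdeal R ^ n)
    {j n : ℕ} (h : (G.liftRes hnzd).NuVanishes (maximalIdeal R) j n) :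
    G.toProjRes.NuVanishes (maximalIdeal _) j n := by
  intro z' hz'
  obtain ⟨a, rfl⟩ := reduceMod_surjective _ _ z'
  have ha : reduceMod _ _ (G.liftD j a) ∈ G.pw (n + 1) j := by
    rwa [reduceMod_liftD]
  rw [pw, IsLocalRing.maximalIdeal_quotient_pow, reduceMod_mem_map_smul_top_iff] at ha
  obtain ⟨m, hm, u, hmu⟩ := ha
  obtain ⟨⟨c, e⟩, hy⟩ := h (a, -u) (G.liftResD_mem_of_fst_mem hstrict (by
    rwa [liftResD_fst, smul_neg, ← sub_eq_add_neg, hmu, add_sub_cancel_right]))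
  have hy₁ := ((Ideal.mem_smul_top_prod_iff _).mp hy).1
  rw [Prod.fst_sub, liftResD_fst] at hy₁
  refine ⟨reduceMod _ _ c, ?_⟩
  rw [← reduceMod_liftD, ← map_sub, IsLocalRing.maximalIdeal_quotient_pow,
    reduceMod_mem_map_smul_top_iff]
  exact ⟨_, hy₁, e, by abel⟩

theorem nuVanishes_liftRes_iff (hnzd : x ∈ nonZeroDivisors R)
    (hstrict : ∀ n : ℕ, ∀ r : R, x * r ∈ maximalIdeal R ^ (n + 1) → r ∈ maximalIdeal R ^ n)
    {j n : ℕ} : (G.liftRes hnzd).NuVanishes (maximalIdeal R) j n ↔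
      G.toProjRes.NuVanishes (maximalIdeal _) j n :=
  ⟨G.nuVanishes_of_nuVanishes_liftRes hnzd hstrict,
    G.nuVanishes_liftRes_of_nuVanishes hnzd hstrict⟩

end

end MinFreeRes

theorem ldefect_quotient_strictly_regular_general (R : Type) [CommRing R] [IsLocalRing R]
    (x : R) (hnzd : x ∈ nonZeroDivisors R)
    (hstrict : ∀ n : ℕ, ∀ r : R, x * r ∈ maximalIdeal R ^ (n + 1) → r ∈ maximalIdeal R ^ n)
    [IsLocalRing (R ⧸ Ideal.span {x})]
    (F : MinFreeRes R (R ⧸ maximalIdeal R))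
    (G : MinFreeRes (R ⧸ Ideal.span {x})
      ((R ⧸ Ideal.span {x}) ⧸ maximalIdeal (R ⧸ Ideal.span {x}))) :
    F.ldefect = G.ldefect := by
  have hnu (j n : ℕ) : F.toProjRes.NuVanishes (maximalIdeal R) j n ↔
      G.toProjRes.NuVanishes (maximalIdeal _) j n :=
    (ProjRes.nuVanishes_iff_of_linearEquiv (residueFieldQuotientEquiv _).symm).trans
      (G.nuVanishes_liftRes_iff hnzd hstrict)
  refine ENat.eq_of_forall_le_natCast_iff fun d => ?_
  simp only [MinFreeRes.ldefect_le_iff, MinFreeRes.tail_linHZero_iff, hnu]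

/-- if `x ∈ 𝔪 ∖ 𝔪²` is a strictly regular element (a nonzerodivisor with
`(𝔪^{n+1} : x) ⊆ 𝔪^n` for all `n`), then `ld_R(k) = ld_{R/(x)}(k)`: the linearity defects
computed from any minimal free resolution `F` of `k` over `R` and any minimal free
resolution `G` of `k` over `R/(x)` agree. -/
theorem ldefect_quotient_strictly_regular (R : Type) [CommRing R] [IsLocalRing R]
    [IsNoetherianRing R] (hm : maximalIdeal R ≠ ⊥)
    (x : R) (hx : x ∈ maximalIdeal R) (hx2 : x ∉ maximalIdeal R ^ 2)
    (hnzd : x ∈ nonZeroDivisors R)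
    (hstrict : ∀ n : ℕ, ∀ r : R, x * r ∈ maximalIdeal R ^ (n + 1) → r ∈ maximalIdeal R ^ n)
    [IsLocalRing (R ⧸ Ideal.span {x})]
    (F : MinFreeRes R (R ⧸ maximalIdeal R))
    (G : MinFreeRes (R ⧸ Ideal.span {x})
      ((R ⧸ Ideal.span {x}) ⧸ maximalIdeal (R ⧸ Ideal.span {x}))) :
    F.ldefect = G.ldefect :=
  ldefect_quotient_strictly_regular_general R x hnzd hstrict F G
end
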